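/- For integers n, m ≥ 3, the F-index of the edge T-join of the cycle C_n and the cycle C_m is F(C_n ∨̱_T C_m) = m³n + 12m²n + mn²(n + 6) + 60mn + 8m + 128n. -/

import Mathlib

/-- The subdivision graph `S(G)`: a new vertex is inserted into each edge of `G`
(each edge is replaced by a path of length 2). The inserted vertices form the
right summand `↥G.edgeSet`. -/
def Sgraph {V : Type*} (G : SimpleGraph V) : SimpleGraph (V ⊕ ↥G.edgeSet) where
  Adj x y :=
    match x, y with
    | Sum.inl v, Sum.inr e => v ∈ (e : Sym2 V)
    | Sum.inr e, Sum.inl v => v ∈ (e : Sym2 V)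
    | _, _ => False
  symm := by constructor; rintro (v | e) (w | f) h <;> exact h
  loopless := by constructor; rintro (v | e) h <;> exact h

/-- The graph `R(G)`: obtained from `G` by inserting a new vertex into each edge of `G`
and joining each new vertex to the end vertices of its corresponding edge. -/
def Rgraph {V : Type*} (G : SimpleGraph V) : SimpleGraph (V ⊕ ↥G.edgeSet) where
  Adj x y :=
    match x, y with
    | Sum.inl v, Sum.inl w => G.Adj v w
    | Sum.inl v, Sum.inr e => v ∈ (e : Sym2 V)
    | Sum.inr e, Sum.inl v => v ∈ (e : Sym2 V)
    | Sum.inr _, Sum.inr _ => False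
  symm := by
    constructor
    rintro (v | e) (w | f) h
    · exact G.adj_symm h
    · exact h
    · exact h
    · exact h
  loopless := by
    constructor
    rintro (v | e) h
    · exact G.irrefl h
    · exact h

/-- The graph `Q(G)`: obtained from `G` by inserting a new vertex into each edge of `G`,
then joining by edges those pairs of new vertices lying on adjacent edges of `G`. -/
def Qgraph {V : Type*} (G : SimpleGraph V) : SimpleGraph (V ⊕ ↥G.edgeSet) where
  Adj x y :=
    match x, y with
    | Sum.inl _, Sum.inl _ => False
    | Sum.inl v, Sum.inr e => v ∈ (e : Sym2 V)
    | Sum.inr e, Sum.inl v => v ∈ (e : Sym2 V)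
    | Sum.inr e, Sum.inr f => e ≠ f ∧ ∃ v, v ∈ (e : Sym2 V) ∧ v ∈ (f : Sym2 V)
  symm := by
    constructor
    rintro (v | e) (w | f) h
    · exact h
    · exact h
    · exact h
    · exact ⟨h.1.symm, by obtain ⟨v, h1, h2⟩ := h.2; exact ⟨v, h2, h1⟩⟩
  loopless := by
    constructor
    rintro (v | e) h
    · exact h
    · exact h.1 rfl

/-- The total graph `T(G)`: obtained from `G` by inserting a new vertex into each edge,
joining each new vertex to the end vertices of its corresponding edge, and joining by
edges those pairs of new vertices lying on adjacent edges of `G`. -/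
def Tgraph {V : Type*} (G : SimpleGraph V) : SimpleGraph (V ⊕ ↥G.edgeSet) where
  Adj x y :=
    match x, y with
    | Sum.inl v, Sum.inl w => G.Adj v w
    | Sum.inl v, Sum.inr e => v ∈ (e : Sym2 V)
    | Sum.inr e, Sum.inl v => v ∈ (e : Sym2 V)
    | Sum.inr e, Sum.inr f => e ≠ f ∧ ∃ v, v ∈ (e : Sym2 V) ∧ v ∈ (f : Sym2 V)
  symm := by
    constructor
    rintro (v | e) (w | f) h
    · exact G.adj_symm h
    · exact h
    · exact h
    · exact ⟨h.1.symm, by obtain ⟨v, h1, h2⟩ := h.2; exact ⟨v, h2, h1⟩⟩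
  loopless := by
    constructor
    rintro (v | e) h
    · exact G.irrefl h
    · exact h.1 rfl

/-- The disjoint union of `H` and `K` together with all edges joining a vertex `a` of `H`
with `P a` to every vertex of `K`. -/
def joinOn {A B : Type*} (H : SimpleGraph A) (K : SimpleGraph B) (P : A → Prop) :
    SimpleGraph (A ⊕ B) where
  Adj x y :=
    match x, y with
    | Sum.inl a, Sum.inl a' => H.Adj a a'
    | Sum.inr b, Sum.inr b' => K.Adj b b'
    | Sum.inl a, Sum.inr _ => P a
    | Sum.inr _, Sum.inl a => P a
  symm := by
    constructor
    rintro (a | b) (a' | b') h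
    · exact H.adj_symm h
    · exact h
    · exact h
    · exact K.adj_symm h
  loopless := by
    constructor
    rintro (a | b) h
    · exact H.irrefl h
    · exact K.irrefl h

/-- The vertex S-join `G₁ ∨̇_S G₂`: obtained from `S(G₁)` and `G₂` by joining each vertex
of `V(G₁)` to every vertex of `G₂`. -/
def vertexSJoin {V₁ V₂ : Type*} (G₁ : SimpleGraph V₁) (G₂ : SimpleGraph V₂) :
    SimpleGraph ((V₁ ⊕ ↥G₁.edgeSet) ⊕ V₂) :=
  joinOn (Sgraph G₁) G₂ (fun x => x.isLeft)

/-- The edge S-join `G₁ ∨̱_S G₂`: obtained from `S(G₁)` and `G₂` by joining each inserted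
vertex (each vertex of `I(G₁)`) to every vertex of `G₂`. -/
def edgeSJoin {V₁ V₂ : Type*} (G₁ : SimpleGraph V₁) (G₂ : SimpleGraph V₂) :
    SimpleGraph ((V₁ ⊕ ↥G₁.edgeSet) ⊕ V₂) :=
  joinOn (Sgraph G₁) G₂ (fun x => x.isRight)

/-- The vertex R-join `G₁ ∨̇_R G₂`. -/
def vertexRJoin {V₁ V₂ : Type*} (G₁ : SimpleGraph V₁) (G₂ : SimpleGraph V₂) :
    SimpleGraph ((V₁ ⊕ ↥G₁.edgeSet) ⊕ V₂) :=
  joinOn (Rgraph G₁) G₂ (fun x => x.isLeft)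

/-- The edge R-join `G₁ ∨̱_R G₂`. -/
def edgeRJoin {V₁ V₂ : Type*} (G₁ : SimpleGraph V₁) (G₂ : SimpleGraph V₂) :
    SimpleGraph ((V₁ ⊕ ↥G₁.edgeSet) ⊕ V₂) :=
  joinOn (Rgraph G₁) G₂ (fun x => x.isRight)

/-- The vertex Q-join `G₁ ∨̇_Q G₂`. -/
def vertexQJoin {V₁ V₂ : Type*} (G₁ : SimpleGraph V₁) (G₂ : SimpleGraph V₂) :
    SimpleGraph ((V₁ ⊕ ↥G₁.edgeSet) ⊕ V₂) :=
  joinOn (Qgraph G₁) G₂ (fun x => x.isLeft)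

/-- The edge Q-join `G₁ ∨̱_Q G₂`. -/
def edgeQJoin {V₁ V₂ : Type*} (G₁ : SimpleGraph V₁) (G₂ : SimpleGraph V₂) :
    SimpleGraph ((V₁ ⊕ ↥G₁.edgeSet) ⊕ V₂) :=
  joinOn (Qgraph G₁) G₂ (fun x => x.isRight)

/-- The vertex T-join `G₁ ∨̇_T G₂`. -/
def vertexTJoin {V₁ V₂ : Type*} (G₁ : SimpleGraph V₁) (G₂ : SimpleGraph V₂) :
    SimpleGraph ((V₁ ⊕ ↥G₁.edgeSet) ⊕ V₂) :=
  joinOn (Tgraph G₁) G₂ (fun x => x.isLeft)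

/-- The edge T-join `G₁ ∨̱_T G₂`. -/
def edgeTJoin {V₁ V₂ : Type*} (G₁ : SimpleGraph V₁) (G₂ : SimpleGraph V₂) :
    SimpleGraph ((V₁ ⊕ ↥G₁.edgeSet) ⊕ V₂) :=
  joinOn (Tgraph G₁) G₂ (fun x => x.isRight)

/-- Degree of a vertex in a graph on a finite vertex type. -/
noncomputable def gdeg {V : Type*} [Finite V] (G : SimpleGraph V) (v : V) : ℕ :=
  haveI : Fintype ↥(G.neighborSet v) := Fintype.ofFinite _
  G.degree v

/-- The forgotten topological index (F-index): `F(G) = ∑_{v ∈ V(G)} d_G(v)³`. -/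
noncomputable def Findex {V : Type*} [Finite V] (G : SimpleGraph V) : ℕ :=
  haveI := Fintype.ofFinite V
  ∑ v : V, gdeg G v ^ 3

/-- The first Zagreb index: `M₁(G) = ∑_{v ∈ V(G)} d_G(v)²`. -/
noncomputable def M1 {V : Type*} [Finite V] (G : SimpleGraph V) : ℕ :=
  haveI := Fintype.ofFinite V
  ∑ v : V, gdeg G v ^ 2

/-- `M₄(G) = ∑_{v ∈ V(G)} d_G(v)⁴`. -/
noncomputable def M4 {V : Type*} [Finite V] (G : SimpleGraph V) : ℕ :=
  haveI := Fintype.ofFinite V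
  ∑ v : V, gdeg G v ^ 4

/-- The hyper Zagreb index: `HM(G) = ∑_{uv ∈ E(G)} (d_G(u) + d_G(v))²`. -/
noncomputable def HM {V : Type*} [Finite V] (G : SimpleGraph V) : ℕ :=
  haveI : Fintype ↥G.edgeSet := Fintype.ofFinite _
  ∑ e : ↥G.edgeSet,
    Sym2.lift ⟨fun u v => (gdeg G u + gdeg G v) ^ 2,
      fun u v => by dsimp only; rw [add_comm]⟩ (e : Sym2 V)

/-- The redefined Zagreb index:
`ReZM(G) = ∑_{uv ∈ E(G)} d_G(u) d_G(v) (d_G(u) + d_G(v))`. -/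
noncomputable def ReZM {V : Type*} [Finite V] (G : SimpleGraph V) : ℕ :=
  haveI : Fintype ↥G.edgeSet := Fintype.ofFinite _
  ∑ e : ↥G.edgeSet,
    Sym2.lift ⟨fun u v => gdeg G u * gdeg G v * (gdeg G u + gdeg G v),
      fun u v => by dsimp only; ring⟩ (e : Sym2 V)

/-- The number of edges of `G`. -/
noncomputable def numEdges {V : Type*} (G : SimpleGraph V) : ℕ :=
  Nat.card ↥G.edgeSet

/-!
Every vertex of a cycle has degree 2, so the total graph `T(Cₙ)` is 4-regular: an inserted
vertex on the edge `uv` sees `u`, `v` and the `d(u) + d(v) - 2` other edges at `u` or `v`.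
In the edge T-join the `n` original vertices of `Cₙ` keep degree 4, each of the `n` inserted
vertices gains the `m` vertices of `Cₘ` (degree `m + 4`), and each vertex of `Cₘ` gains the `n`
inserted vertices (degree `n + 2`). Hence `F = 64n + n(m + 4)³ + m(n + 2)³`.
-/

open SimpleGraph Sum

lemma Nat.card_subtype_sum {α β : Type*} [Finite α] [Finite β] (p : α ⊕ β → Prop) :
    Nat.card {x // p x} = Nat.card {a // p (inl a)} + Nat.card {b // p (inr b)} := by
  rw [Nat.card_congr Equiv.subtypeSum, Nat.card_sum]

section Degree

variable {V : Type*} [Finite V] (G : SimpleGraph V)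

lemma gdeg_eq_degree (v : V) [Fintype (G.neighborSet v)] : gdeg G v = G.degree v := by
  unfold gdeg
  congr
  exact Subsingleton.elim _ _

lemma gdeg_eq_natCard (v : V) : gdeg G v = Nat.card {w // G.Adj v w} := by
  let := Fintype.ofFinite (G.neighborSet v)
  rw [gdeg_eq_degree, ← card_neighborSet_eq_degree, ← Nat.card_eq_fintype_card]
  rfl

lemma natCard_incidentEdges_eq_gdeg (v : V) :
    Nat.card {e : G.edgeSet // v ∈ (e : Sym2 V)} = gdeg G v := by
  classical
  rw [gdeg_eq_natCard]
  exact (Nat.card_congr (Equiv.subtypeSubtypeEquivSubtypeInter (· ∈ G.edgeSet) (v ∈ ·))).trans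
    (Nat.card_congr (G.incidenceSetEquivNeighborSet v))

lemma two_mul_natCard_edgeSet_of_regular {k : ℕ} (hG : ∀ v, gdeg G v = k) :
    2 * Nat.card G.edgeSet = Nat.card V * k := by
  classical
  have := Fintype.ofFinite V
  rw [Nat.card_eq_fintype_card, ← edgeFinset_card, ← sum_degrees_eq_twice_card_edges,
    Nat.card_eq_fintype_card]
  simp [← gdeg_eq_degree, hG]

end Degree

section JoinOn

variable {A B : Type*} [Finite A] [Finite B] (H : SimpleGraph A) (K : SimpleGraph B)
  {P : A → Prop}

lemma gdeg_joinOn_inl_of_not {a : A} (ha : ¬ P a) : gdeg (joinOn H K P) (inl a) = gdeg H a := by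
  have : IsEmpty {b : B // P a} := ⟨fun b => ha b.2⟩
  rw [gdeg_eq_natCard, Nat.card_subtype_sum, gdeg_eq_natCard]
  change _ + Nat.card {b : B // P a} = _
  rw [Nat.card_of_isEmpty (α := {b : B // P a}), add_zero]
  rfl

lemma gdeg_joinOn_inl_of {a : A} (ha : P a) :
    gdeg (joinOn H K P) (inl a) = gdeg H a + Nat.card B := by
  rw [gdeg_eq_natCard, Nat.card_subtype_sum, gdeg_eq_natCard,
    ← Nat.card_congr (Equiv.subtypeUnivEquiv (p := fun _ : B => P a) fun _ => ha)]
  rfl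

lemma gdeg_joinOn_inr (b : B) :
    gdeg (joinOn H K P) (inr b) = Nat.card {a // P a} + gdeg K b := by
  rw [gdeg_eq_natCard, Nat.card_subtype_sum, gdeg_eq_natCard]
  rfl

end JoinOn

section Tgraph

variable {V : Type*} [Finite V] (G : SimpleGraph V)

lemma gdeg_Tgraph_inl (v : V) : gdeg (Tgraph G) (inl v) = 2 * gdeg G v := by
  rw [gdeg_eq_natCard, Nat.card_subtype_sum, two_mul]
  congr 1
  · rw [gdeg_eq_natCard]
    rfl
  · exact natCard_incidentEdges_eq_gdeg G v

lemma gdeg_Tgraph_inr {u v : V} (h : G.Adj u v) :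
    gdeg (Tgraph G) (inr ⟨s(u, v), h⟩) = gdeg G u + gdeg G v := by
  set e : G.edgeSet := ⟨s(u, v), h⟩
  let I (w : V) : Set G.edgeSet := {f | w ∈ (f : Sym2 V)}
  have hI (w : V) : (I w).ncard = gdeg G w := natCard_incidentEdges_eq_gdeg G w
  -- `e` is the only edge through both of its ends, since `G` has no multiple edges.
  have hinter : I u ∩ I v = {e} := by
    ext f
    simp only [Set.mem_inter_iff, Set.mem_singleton_iff, I, Set.mem_ofPred_eq]
    rw [Sym2.mem_and_mem_iff h.ne, Subtype.ext_iff]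
  have hends : {w | w ∈ (e : Sym2 V)} = ({u, v} : Set V) := by
    ext w
    exact Sym2.mem_iff
  have hothers : {f | e ≠ f ∧ ∃ w, w ∈ (e : Sym2 V) ∧ w ∈ (f : Sym2 V)} = (I u ∪ I v) \ {e} := by
    ext f
    simp only [Set.mem_sdiff, Set.mem_union, Set.mem_singleton_iff, I, Set.mem_ofPred_eq,
      Sym2.mem_iff, e]
    aesop
  have hunion := Set.ncard_union_add_ncard_inter (I u) (I v)
  have herase :=
    Set.ncard_sdiff_singleton_add_one (show e ∈ I u ∪ I v from Or.inl (Sym2.mem_mk_left u v))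
  rw [gdeg_eq_natCard, Nat.card_subtype_sum]
  change (Set.ncard {w | w ∈ (e : Sym2 V)}) + Set.ncard {f | e ≠ f ∧ _} = _
  rw [hends, Set.ncard_pair h.ne, hothers]
  rw [hinter, Set.ncard_singleton, hI, hI] at hunion
  omega

lemma gdeg_Tgraph_of_regular {k : ℕ} (hG : ∀ v, gdeg G v = k) (x : V ⊕ G.edgeSet) :
    gdeg (Tgraph G) x = 2 * k := by
  rcases x with v | ⟨e, he⟩
  · rw [gdeg_Tgraph_inl, hG]
  · induction e using Sym2.ind with
    | h u v => rw [gdeg_Tgraph_inr G he, hG, hG, two_mul]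

end Tgraph

lemma Findex_eq_sum {V : Type*} [Fintype V] (G : SimpleGraph V) :
    Findex G = ∑ v, gdeg G v ^ 3 := by
  unfold Findex
  congr
  exact Subsingleton.elim _ _

theorem Findex_edgeTJoin_of_regular {V₁ V₂ : Type*} [Finite V₁] [Finite V₂]
    {G₁ : SimpleGraph V₁} {G₂ : SimpleGraph V₂} {k r : ℕ}
    (h₁ : ∀ v, gdeg G₁ v = k) (h₂ : ∀ w, gdeg G₂ w = r) :
    Findex (edgeTJoin G₁ G₂) = Nat.card V₁ * (2 * k) ^ 3 +
      Nat.card G₁.edgeSet * (2 * k + Nat.card V₂) ^ 3 +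
      Nat.card V₂ * (Nat.card G₁.edgeSet + r) ^ 3 := by
  have := Fintype.ofFinite V₁
  have := Fintype.ofFinite V₂
  have := Fintype.ofFinite G₁.edgeSet
  have hinserted : Nat.card {x : V₁ ⊕ G₁.edgeSet // x.isRight} = Nat.card G₁.edgeSet := by
    rw [Nat.card_subtype_sum]
    simp
  have hV₁ (v : V₁) : gdeg (edgeTJoin G₁ G₂) (inl (inl v)) = 2 * k := by
    rw [edgeTJoin, gdeg_joinOn_inl_of_not _ _ (by simp), gdeg_Tgraph_of_regular G₁ h₁]
  have hE (e : G₁.edgeSet) : gdeg (edgeTJoin G₁ G₂) (inl (inr e)) = 2 * k + Nat.card V₂ := by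
    rw [edgeTJoin, gdeg_joinOn_inl_of _ _ (by simp), gdeg_Tgraph_of_regular G₁ h₁]
  have hV₂ (w : V₂) : gdeg (edgeTJoin G₁ G₂) (inr w) = Nat.card G₁.edgeSet + r := by
    rw [edgeTJoin, gdeg_joinOn_inr, h₂, hinserted]
  simp only [Findex_eq_sum, Fintype.sum_sum_type, hV₁, hE, hV₂, Finset.sum_const,
    Finset.card_univ, Fintype.card_eq_nat_card, smul_eq_mul]

lemma gdeg_cycleGraph {n : ℕ} (hn : 3 ≤ n) (v : Fin n) : gdeg (cycleGraph n) v = 2 := by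
  obtain ⟨k, rfl⟩ := Nat.exists_eq_add_of_le' hn
  rw [gdeg_eq_degree, cycleGraph_degree_three_le]

lemma natCard_edgeSet_cycleGraph {n : ℕ} (hn : 3 ≤ n) : Nat.card (cycleGraph n).edgeSet = n := by
  have := two_mul_natCard_edgeSet_of_regular _ (gdeg_cycleGraph hn)
  rw [Nat.card_fin] at this
  omega

theorem Findex_edgeTJoin_ex19 (n m : ℕ) (hn : 3 ≤ n) (hm : 3 ≤ m) :
    (Findex (edgeTJoin (SimpleGraph.cycleGraph n) (SimpleGraph.cycleGraph m)) : ℤ) =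
      (m : ℤ) ^ 3 * (n : ℤ) + 12 * (m : ℤ) ^ 2 * (n : ℤ) + (m : ℤ) * (n : ℤ) ^ 2 * ((n : ℤ) + 6) + 60 * (m : ℤ) * (n : ℤ) + 8 * (m : ℤ) + 128 * (n : ℤ) := by
  rw [Findex_edgeTJoin_of_regular (gdeg_cycleGraph hn) (gdeg_cycleGraph hm),
    natCard_edgeSet_cycleGraph hn, Nat.card_fin, Nat.card_fin]
  push_cast
  ring
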